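/- arXiv:2512.19040 — 4 statements merged into one kernel-verified Lean document; each statement's English description precedes it below -/
import Mathlib

section
/- Let G be a connected graph and r ≥ 1 an integer. Then the ball B_G(v, 2r/2) is a path for every vertex v of G if and only if G is a path or a cycle of length greater than 2r. -/
open SimpleGraph

/-- `G` is an interval graph: vertices can be assigned nonempty closed real intervals such that
distinct vertices are adjacent iff their intervals intersect. -/
def IsIntervalGraph {V : Type*} (G : SimpleGraph V) : Prop :=
  ∃ I : V → Set ℝ, (∀ v, ∃ a b : ℝ, a ≤ b ∧ I v = Set.Icc a b) ∧
    ∀ u v : V, u ≠ v → (G.Adj u v ↔ (I u ∩ I v).Nonempty)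

/-- The ball `B_G(v, r/2)`: vertices at distance at most `⌊r/2⌋` from `v`, and edges `xy` of `G`
with `d(v,x) + d(v,y) < r`. -/
def ball {V : Type*} (G : SimpleGraph V) (v : V) (r : ℕ) : G.Subgraph where
  verts := {x | G.Reachable v x ∧ G.dist v x ≤ r / 2}
  Adj x y := G.Adj x y ∧ (G.Reachable v x ∧ G.dist v x ≤ r / 2) ∧
    (G.Reachable v y ∧ G.dist v y ≤ r / 2) ∧ G.dist v x + G.dist v y < r
  adj_sub h := h.1
  edge_vert h := h.2.1
  symm := ⟨fun x y h => ⟨h.1.symm, h.2.2.1, h.2.1, by have := h.2.2.2; omega⟩⟩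

/-- `G` is `r`-locally interval if all its `r/2`-balls are interval graphs. -/
def LocallyInterval {V : Type*} (G : SimpleGraph V) (r : ℕ) : Prop :=
  ∀ v : V, IsIntervalGraph (_root_.ball G v r).coe

/-- `G` is a path graph (on at least one vertex). -/
def IsPathGraph {V : Type*} (G : SimpleGraph V) : Prop :=
  ∃ n : ℕ, 1 ≤ n ∧ Nonempty (G ≃g pathGraph n)

/-- `G` contains an induced subgraph isomorphic to `H`. -/
def HasInducedCopy {V W : Type*} (G : SimpleGraph V) (H : SimpleGraph W) : Prop :=
  ∃ s : Set V, Nonempty (G.induce s ≃g H)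

/-- `G` is chordal: no induced cycle of length at least 4. -/
def IsChordal {V : Type*} (G : SimpleGraph V) : Prop :=
  ∀ n : ℕ, 4 ≤ n → ¬ HasInducedCopy G (cycleGraph n)

/-- `G` is `r`-chordal: no induced cycle of length `ℓ` with `4 ≤ ℓ ≤ r`. -/
def RChordal {V : Type*} (G : SimpleGraph V) (r : ℕ) : Prop :=
  ∀ n : ℕ, 4 ≤ n → n ≤ r → ¬ HasInducedCopy G (cycleGraph n)

/-- The wheel `W_n`: a cycle of length `n` together with a vertex adjacent to all its vertices. -/
def wheel (n : ℕ) : SimpleGraph (Option (Fin n)) :=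
  SimpleGraph.fromRel
    (fun u v => u = none ∨ ∃ a b : Fin n, u = some a ∧ v = some b ∧ (cycleGraph n).Adj a b)

/-- `G` is wheel-free: no induced `W_n` for `n ≥ 4`. -/
def WheelFree {V : Type*} (G : SimpleGraph V) : Prop :=
  ∀ n : ℕ, 4 ≤ n → ¬ HasInducedCopy G (wheel n)

/-- `A` is a circular-arc representation of `G` over the cycle `cycleGraph n`: each vertex is
assigned a nonempty subpath of the cycle, and distinct vertices are adjacent iff their subpaths
share a vertex. -/
def IsCircularArcRep {V : Type*} {n : ℕ} (G : SimpleGraph V)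
    (A : V → (cycleGraph n).Subgraph) : Prop :=
  (∀ v : V, IsPathGraph (A v).coe) ∧
    ∀ u v : V, u ≠ v → (G.Adj u v ↔ ((A u).verts ∩ (A v).verts).Nonempty)

/-- `G` is a circular-arc graph. -/
def IsCircularArcGraph {V : Type*} (G : SimpleGraph V) : Prop :=
  ∃ n : ℕ, 3 ≤ n ∧ ∃ A : V → (cycleGraph n).Subgraph, IsCircularArcRep G A

/-- `G` is an `r`-acyclic circular-arc graph: it has a circular-arc representation in which the
union of the arcs of any at most `r` vertices is acyclic. -/
def IsRAcyclicCircularArcGraph {V : Type*} (G : SimpleGraph V) (r : ℕ) : Prop :=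
  ∃ n : ℕ, 3 ≤ n ∧ ∃ A : V → (cycleGraph n).Subgraph, IsCircularArcRep G A ∧
    ∀ X : Finset V, X.card ≤ r → ((⨆ x ∈ X, A x).coe).IsAcyclic

/-- The long claw: `K_{1,3}` with every edge subdivided once. Center `0`, middle vertices
`1, 2, 3`, leaves `4, 5, 6`. -/
def longClaw : SimpleGraph (Fin 7) :=
  SimpleGraph.fromEdgeSet {s(0,1), s(0,2), s(0,3), s(1,4), s(2,5), s(3,6)}

/-- The long claw plus one leaf–leaf edge. -/
def augLongClaw1 : SimpleGraph (Fin 7) :=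
  SimpleGraph.fromEdgeSet {s(0,1), s(0,2), s(0,3), s(1,4), s(2,5), s(3,6), s(4,5)}

/-- The long claw plus two leaf–leaf edges. -/
def augLongClaw2 : SimpleGraph (Fin 7) :=
  SimpleGraph.fromEdgeSet {s(0,1), s(0,2), s(0,3), s(1,4), s(2,5), s(3,6), s(4,5), s(5,6)}

/-- The long claw plus all three leaf–leaf edges. -/
def augLongClaw3 : SimpleGraph (Fin 7) :=
  SimpleGraph.fromEdgeSet {s(0,1), s(0,2), s(0,3), s(1,4), s(2,5), s(3,6), s(4,5), s(5,6), s(4,6)}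

/-- The cone over `G`: `G` plus one new vertex adjacent to every vertex of `G`. -/
def cone {V : Type*} (G : SimpleGraph V) : SimpleGraph (Option V) :=
  SimpleGraph.fromRel (fun u v => u = none ∨ ∃ a b : V, u = some a ∧ v = some b ∧ G.Adj a b)

/-! If every ball `B(v, 2r/2)` is a path, then the star of each vertex (which lies in its ball)
shows that no vertex has three neighbours. A connected finite graph of maximum degree at most two
is a path or a cycle: from a vertex with at most one neighbour, the distance is injective and
labels the vertices `0, …, |V| - 1` as a path; if every vertex has two neighbours, deleting one
edge `wa` leaves a connected graph (the edge lies on a cycle) in which `w` and `a` are the two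
ends of a path, and restoring the edge closes it into a cycle. A cycle of length `n ≤ 2r` is
excluded because then the ball is the whole cycle. Conversely, the distance formulas in paths and
cycles show that every ball of a path, and every ball of radius `r` in a cycle of length `> 2r`,
is a path. -/

section

variable {V W : Type*} {G : SimpleGraph V} {H : SimpleGraph W}

namespace SimpleGraph

theorem Hom.edist_map_le (f : G →g H) (u v : V) : H.edist (f u) (f v) ≤ G.edist u v := by
  by_cases h : G.Reachable u v
  · obtain ⟨p, hp⟩ := h.exists_walk_length_eq_edist
    rw [← hp]
    simpa using edist_le (p.map f)
  · simp [edist_eq_top_of_not_reachable h]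

theorem Iso.edist_map (e : G ≃g H) (u v : V) : H.edist (e u) (e v) = G.edist u v :=
  le_antisymm (e.toHom.edist_map_le u v) (by simpa using e.symm.toHom.edist_map_le (e u) (e v))

theorem Iso.dist_map (e : G ≃g H) (u v : V) : H.dist (e u) (e v) = G.dist u v := by
  simp only [dist, e.edist_map]

theorem dist_eq_of_potential {v : V} (f : V → ℕ) (hzero : ∀ x, f x = 0 ↔ x = v)
    (hlip : ∀ ⦃x y⦄, G.Adj x y → f x ≤ f y + 1)
    (hdesc : ∀ x, x ≠ v → ∃ y, G.Adj x y ∧ f y < f x) (x : V) : G.dist v x = f x := by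
  have lower : ∀ {x y} (p : G.Walk x y), f x ≤ f y + p.length := by
    intro x y p
    induction p with
    | nil => simp
    | cons h _ ih => have := hlip h; simp only [Walk.length_cons]; omega
  have upper : ∀ k x, f x ≤ k → ∃ p : G.Walk x v, p.length ≤ f x := by
    intro k
    induction k with
    | zero =>
      intro x hx
      obtain rfl := (hzero x).mp (by omega)
      exact ⟨.nil, by simp⟩
    | succ k ih =>
      intro x hx
      by_cases hxv : x = v
      · subst hxv; exact ⟨.nil, by simp⟩
      · obtain ⟨y, hxy, hy⟩ := hdesc x hxv
        obtain ⟨p, hp⟩ := ih y (by omega)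
        exact ⟨.cons hxy p, by simp only [Walk.length_cons]; omega⟩
  obtain ⟨p, hp⟩ := upper _ x le_rfl
  obtain ⟨q, hq⟩ := p.reachable.exists_walk_length_eq_dist
  have hfq := lower q
  rw [(hzero v).mpr rfl] at hfq
  rw [dist_comm]
  exact le_antisymm ((dist_le p).trans hp) (by omega)

theorem exists_adj_dist_eq_of_dist_eq_succ {u x : V} {k : ℕ} (hr : G.Reachable u x)
    (h : G.dist u x = k + 1) : ∃ y, G.Adj x y ∧ G.dist u y = k := by
  obtain ⟨p, hp⟩ := hr.symm.exists_walk_length_eq_dist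
  rw [dist_comm, h] at hp
  cases p with
  | nil => simp at hp
  | cons hxy q =>
    refine ⟨_, hxy, le_antisymm ?_ ?_⟩
    · rw [dist_comm]
      have := dist_le q
      simp only [Walk.length_cons] at hp
      omega
    · rcases hxy.diff_dist_adj (u := u) with h' | h' | h' <;> omega

theorem Connected.deleteEdges_of_reachable {u v : V} (hconn : G.Connected)
    (h : (G.deleteEdges {s(u, v)}).Reachable u v) : (G.deleteEdges {s(u, v)}).Connected := by
  have := hconn.nonempty
  refine ⟨fun x y => ?_⟩
  rw [reachable_iff_reflTransGen]
  refine Relation.ReflTransGen.lift' id (fun p q hpq => ?_) x y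
    ((reachable_iff_reflTransGen _ _).1 (hconn x y))
  change Relation.ReflTransGen _ p q
  rw [← reachable_iff_reflTransGen]
  by_cases he : s(p, q) = s(u, v)
  · rcases Sym2.eq_iff.1 he with ⟨rfl, rfl⟩ | ⟨rfl, rfl⟩
    exacts [h, h.symm]
  · exact Adj.reachable (by simp [hpq, he])

theorem cycleGraph_adj_iff {n : ℕ} (hn : 2 ≤ n) {u v : Fin n} :
    (cycleGraph n).Adj u v ↔ (pathGraph n).Adj u v ∨
      (u.val = 0 ∧ v.val = n - 1) ∨ (v.val = 0 ∧ u.val = n - 1) := by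
  rw [cycleGraph_adj', pathGraph_adj]
  have := u.2
  have := v.2
  rcases lt_trichotomy u v with h | rfl | h
  · rw [Fin.coe_sub_iff_lt.mpr h, Fin.coe_sub_iff_le.mpr h.le]
    rw [Fin.lt_def] at h
    omega
  · rw [Fin.coe_sub_iff_le.mpr le_rfl]
    omega
  · rw [Fin.coe_sub_iff_lt.mpr h, Fin.coe_sub_iff_le.mpr h.le]
    rw [Fin.lt_def] at h
    omega

theorem pathGraph_dist {n : ℕ} (u v : Fin n) : (pathGraph n).dist u v = Nat.dist u v := by
  refine dist_eq_of_potential (fun x : Fin n => Nat.dist u x) ?_ ?_ ?_ v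
  · intro x
    simp only [Nat.dist, Fin.ext_iff]
    omega
  · intro x y h
    rw [pathGraph_adj] at h
    simp only [Nat.dist]
    omega
  · intro x hx
    rw [Ne, Fin.ext_iff] at hx
    rcases Nat.lt_or_gt_of_ne hx with h | h
    · refine ⟨⟨x + 1, by omega⟩, by simp [pathGraph_adj], ?_⟩
      simp only [Nat.dist]
      omega
    · refine ⟨⟨x - 1, by omega⟩, by simp [pathGraph_adj]; omega, ?_⟩
      simp only [Nat.dist]
      omega

theorem cycleGraph_dist_zero {n : ℕ} [NeZero n] (hn : 2 ≤ n) (x : Fin n) :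
    (cycleGraph n).dist 0 x = min x.val (n - x.val) := by
  refine dist_eq_of_potential (fun x : Fin n => min x.val (n - x.val)) ?_ ?_ ?_ x
  · intro x
    have := x.2
    simp only [Fin.ext_iff, Fin.val_zero]
    omega
  · intro x y h
    rw [cycleGraph_adj_iff hn, pathGraph_adj] at h
    omega
  · intro x hx
    rw [Ne, Fin.ext_iff, Fin.val_zero] at hx
    have := x.2
    by_cases h : x.val ≤ n - x.val
    · refine ⟨⟨x - 1, by omega⟩, ?_, ?_⟩ <;>
        simp only [cycleGraph_adj_iff hn, pathGraph_adj] <;> omega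
    · by_cases hx1 : x.val + 1 < n
      · refine ⟨⟨x + 1, hx1⟩, (cycleGraph_adj_iff hn).2 (.inl (by simp [pathGraph_adj])),
          ?_⟩
        dsimp only
        omega
      · refine ⟨0, ?_, ?_⟩ <;>
        simp only [cycleGraph_adj_iff hn, pathGraph_adj, Fin.val_zero, true_and] <;> omega

def cycleGraph.rotate {n : ℕ} [NeZero n] (c : Fin n) : cycleGraph n ≃g cycleGraph n :=
  ⟨Equiv.addRight c, by simp [cycleGraph_adj']⟩

def MaxDegreeLeTwo (G : SimpleGraph V) : Prop :=
  ∀ ⦃v a b c : V⦄, G.Adj v a → G.Adj v b → G.Adj v c → a = b ∨ a = c ∨ b = c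

theorem MaxDegreeLeTwo.mono {G' : SimpleGraph V} (h : MaxDegreeLeTwo G) (hle : G' ≤ G) :
    MaxDegreeLeTwo G' :=
  fun _ _ _ _ ha hb hc => h (hle ha) (hle hb) (hle hc)

theorem MaxDegreeLeTwo.of_iso (e : G ≃g H) (h : MaxDegreeLeTwo H) : MaxDegreeLeTwo G := by
  intro v a b c ha hb hc
  simpa only [e.injective.eq_iff] using
    h (e.map_adj_iff.2 ha) (e.map_adj_iff.2 hb) (e.map_adj_iff.2 hc)

theorem maxDegreeLeTwo_pathGraph (n : ℕ) : MaxDegreeLeTwo (pathGraph n) := by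
  intro v a b c ha hb hc
  simp only [pathGraph_adj, Fin.ext_iff] at *
  omega

theorem MaxDegreeLeTwo.isCycles (hdeg : MaxDegreeLeTwo G)
    (h2 : ∀ v, (G.neighborSet v).Nontrivial) : G.IsCycles := by
  intro v _
  obtain ⟨a, ha, b, hb, hab⟩ := h2 v
  refine Set.ncard_eq_two.2 ⟨a, b, hab, Set.ext fun c => ⟨fun hc => ?_, ?_⟩⟩
  · rcases hdeg hc ha hb with h | h | h
    exacts [.inl h, .inr h, absurd h hab]
  · rintro (rfl | rfl) <;> assumption

theorem MaxDegreeLeTwo.subsingleton_neighborSet_deleteEdges (hdeg : MaxDegreeLeTwo G) {u v : V}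
    (huv : G.Adj u v) : ((G.deleteEdges {s(u, v)}).neighborSet u).Subsingleton := by
  intro c hc d hd
  simp only [mem_neighborSet, deleteEdges_adj, Set.mem_singleton_iff, Sym2.eq_iff,
    true_and] at hc hd
  rcases hdeg hc.1 hd.1 huv with h | h | h
  · exact h
  · exact absurd (.inl h) hc.2
  · exact absurd (.inl h) hd.2

theorem injective_dist_of_maxDegreeLeTwo (hconn : G.Connected) (hdeg : MaxDegreeLeTwo G)
    {v₀ : V} (hv₀ : (G.neighborSet v₀).Subsingleton) : Function.Injective (G.dist v₀) := by
  suffices ∀ k x y, G.dist v₀ x = k → G.dist v₀ y = k → x = y from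
    fun x y h => this _ x y h rfl
  intro k
  induction k with
  | zero =>
    intro x y hx hy
    rw [hconn.dist_eq_zero_iff] at hx hy
    rw [← hx, ← hy]
  | succ k ih =>
    intro x y hx hy
    obtain ⟨x', hxx', hx'⟩ := exists_adj_dist_eq_of_dist_eq_succ (hconn v₀ x) hx
    obtain ⟨y', hyy', hy'⟩ := exists_adj_dist_eq_of_dist_eq_succ (hconn v₀ y) hy
    obtain rfl := ih x' y' hx' hy'
    cases k with
    | zero =>
      rw [hconn.dist_eq_zero_iff] at hx'
      subst hx'
      exact hv₀ hxx'.symm hyy'.symm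
    | succ k =>
      obtain ⟨w, hw, hdw⟩ := exists_adj_dist_eq_of_dist_eq_succ (hconn v₀ x') hx'
      rcases hdeg hxx'.symm hyy'.symm hw with h | rfl | rfl
      · exact h
      · omega
      · omega

theorem adj_iff_dist_of_maxDegreeLeTwo (hconn : G.Connected) (hdeg : MaxDegreeLeTwo G)
    {v₀ : V} (hv₀ : (G.neighborSet v₀).Subsingleton) {x y : V} :
    G.Adj x y ↔ G.dist v₀ x + 1 = G.dist v₀ y ∨ G.dist v₀ y + 1 = G.dist v₀ x := by
  have hinj := injective_dist_of_maxDegreeLeTwo hconn hdeg hv₀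
  constructor
  · intro h
    have hne : G.dist v₀ x ≠ G.dist v₀ y := fun h' => h.ne (hinj h')
    rcases h.diff_dist_adj (u := v₀) with h' | h' | h' <;> omega
  · rintro (h | h)
    · obtain ⟨z, hyz, hz⟩ := exists_adj_dist_eq_of_dist_eq_succ (hconn v₀ y) h.symm
      exact hinj hz ▸ hyz.symm
    · obtain ⟨z, hxz, hz⟩ := exists_adj_dist_eq_of_dist_eq_succ (hconn v₀ x) h.symm
      exact hinj hz ▸ hxz

theorem exists_iso_pathGraph_of_maxDegreeLeTwo [Fintype V] (hconn : G.Connected)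
    (hdeg : MaxDegreeLeTwo G) {v₀ : V} (hv₀ : (G.neighborSet v₀).Subsingleton) :
    ∃ e : G ≃g pathGraph (Fintype.card V), ∀ x, (e x : ℕ) = G.dist v₀ x := by
  have hlt (x : V) : G.dist v₀ x < Fintype.card V := by
    obtain ⟨p, hp, hlen⟩ := hconn.exists_path_of_dist v₀ x
    exact hlen ▸ hp.length_lt
  let φ (x : V) : Fin (Fintype.card V) := ⟨G.dist v₀ x, hlt x⟩
  have hφ : Function.Bijective φ := (Fintype.bijective_iff_injective_and_card φ).2
    ⟨fun x y h => injective_dist_of_maxDegreeLeTwo hconn hdeg hv₀ (Fin.val_eq_of_eq h),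
      (Fintype.card_fin _).symm⟩
  refine ⟨⟨Equiv.ofBijective φ hφ, ?_⟩, fun x => rfl⟩
  intro x y
  simp [φ, pathGraph_adj, adj_iff_dist_of_maxDegreeLeTwo hconn hdeg hv₀]

theorem val_eq_zero_or_eq_sub_one_of_subsingleton_neighborSet {n : ℕ} (e : G ≃g pathGraph n)
    {u : V} (hu : (G.neighborSet u).Subsingleton) : (e u : ℕ) = 0 ∨ (e u : ℕ) = n - 1 := by
  by_contra! h
  have := (e u).2
  have hadj (i : Fin n) (hi : (e u : ℕ) + 1 = i ∨ (i : ℕ) + 1 = e u) :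
      G.Adj u (e.symm i) := by
    rwa [← e.map_adj_iff, e.apply_symm_apply, pathGraph_adj]
  have hup := hadj ⟨e u + 1, by omega⟩ (.inl rfl)
  have hdown := hadj ⟨e u - 1, by omega⟩ (.inr (Nat.sub_add_cancel (by omega)))
  have := congrArg (fun x => (e x : ℕ)) (hu hup hdown)
  simp only [RelIso.apply_symm_apply] at this
  omega

theorem nonempty_iso_cycleGraph_of_deleteEdges {n : ℕ} (hn : 2 ≤ n) {w a : V} (hwa : G.Adj w a)
    (e : G.deleteEdges {s(w, a)} ≃g pathGraph n) (hw : (e w : ℕ) = 0)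
    (ha : (e a : ℕ) = n - 1) :
    Nonempty (G ≃g cycleGraph n) := by
  refine ⟨⟨e.toEquiv, fun {x y} => ?_⟩⟩
  change (cycleGraph n).Adj (e x) (e y) ↔ G.Adj x y
  have hval (x y : V) : (e x : ℕ) = e y ↔ x = y := Fin.val_inj.trans e.injective.eq_iff
  rw [cycleGraph_adj_iff hn, e.map_adj_iff, deleteEdges_adj, ← hw, ← ha, hval, hval, hval, hval]
  simp only [Set.mem_singleton_iff, Sym2.eq_iff]
  constructor
  · rintro (⟨h, -⟩ | ⟨rfl, rfl⟩ | ⟨rfl, rfl⟩)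
    exacts [h, hwa, hwa.symm]
  · tauto

theorem exists_iso_cycleGraph_of_maxDegreeLeTwo [Fintype V] (hconn : G.Connected)
    (hdeg : MaxDegreeLeTwo G) (h2 : ∀ v, (G.neighborSet v).Nontrivial) :
    ∃ n, 3 ≤ n ∧ Nonempty (G ≃g cycleGraph n) := by
  obtain ⟨w⟩ := hconn.nonempty
  obtain ⟨a, ha, b, hb, hab⟩ := h2 w
  have hconn' := hconn.deleteEdges_of_reachable ((hdeg.isCycles h2).reachable_deleteEdges ha)
  obtain ⟨e, he⟩ := exists_iso_pathGraph_of_maxDegreeLeTwo hconn' (hdeg.mono (deleteEdges_le _))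
    (hdeg.subsingleton_neighborSet_deleteEdges ha)
  have hew : (e w : ℕ) = 0 := by rw [he, dist_self]
  have h3 : 3 ≤ Fintype.card V := Fintype.two_lt_card_iff.2 ⟨w, a, b, ha.ne, hb.ne, hab⟩
  refine ⟨_, h3, nonempty_iso_cycleGraph_of_deleteEdges (by omega) ha e hew ?_⟩
  have hea := val_eq_zero_or_eq_sub_one_of_subsingleton_neighborSet e
    (Sym2.eq_swap ▸ hdeg.subsingleton_neighborSet_deleteEdges ha.symm)
  exact hea.resolve_left fun h => ha.ne (e.injective (Fin.ext (hew.trans h.symm)))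

end SimpleGraph

theorem IsPathGraph.of_iso (e : G ≃g H) (h : IsPathGraph H) : IsPathGraph G :=
  let ⟨n, hn, ⟨f⟩⟩ := h
  ⟨n, hn, ⟨e.trans f⟩⟩

theorem IsPathGraph.exists_subsingleton_neighborSet (h : IsPathGraph G) :
    ∃ v, (G.neighborSet v).Subsingleton := by
  obtain ⟨n, hn, ⟨e⟩⟩ := h
  refine ⟨e.symm ⟨0, hn⟩, fun c hc d hd => e.injective (Fin.ext ?_)⟩
  rw [mem_neighborSet, ← e.map_adj_iff, e.apply_symm_apply, pathGraph_adj] at hc hd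
  simp only at hc hd
  omega

theorem isPathGraph_of_maxDegreeLeTwo [Fintype V] (hconn : G.Connected)
    (hdeg : MaxDegreeLeTwo G) {v₀ : V} (hv₀ : (G.neighborSet v₀).Subsingleton) :
    IsPathGraph G := by
  obtain ⟨e, -⟩ := exists_iso_pathGraph_of_maxDegreeLeTwo hconn hdeg hv₀
  have := hconn.nonempty
  exact ⟨_, Fintype.card_pos, ⟨e⟩⟩

theorem mem_ball_verts (hG : G.Preconnected) {v x : V} {R : ℕ} :
    x ∈ (_root_.ball G v R).verts ↔ G.dist v x ≤ R / 2 :=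
  and_iff_right (hG v x)

theorem ball_adj (hG : G.Preconnected) {v x y : V} {R : ℕ} :
    (_root_.ball G v R).Adj x y ↔ G.Adj x y ∧ G.dist v x ≤ R / 2 ∧ G.dist v y ≤ R / 2 ∧
      G.dist v x + G.dist v y < R := by
  simp [_root_.ball, hG v x, hG v y]

def ballIso (e : G ≃g H) (v : V) (R : ℕ) :
    (_root_.ball G v R).coe ≃g (_root_.ball H (e v) R).coe where
  toEquiv := e.toEquiv.subtypeEquiv fun x => by simp [_root_.ball, e.dist_map, Iso.reachable_iff]
  map_rel_iff' := by
    rintro ⟨x, hx⟩ ⟨y, hy⟩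
    show (_root_.ball H (e v) R).Adj (e x) (e y) ↔ (_root_.ball G v R).Adj x y
    simp only [_root_.ball, e.dist_map, Iso.reachable_iff, Iso.map_adj_iff]

theorem isPathGraph_ball_iff (e : G ≃g H) (v : V) (R : ℕ) :
    IsPathGraph (_root_.ball G v R).coe ↔ IsPathGraph (_root_.ball H (e v) R).coe :=
  ⟨.of_iso (ballIso e v R).symm, .of_iso (ballIso e v R)⟩

theorem maxDegreeLeTwo_of_isPathGraph_ball {R : ℕ} (hR : 2 ≤ R)
    (h : ∀ v, IsPathGraph (_root_.ball G v R).coe) : MaxDegreeLeTwo G := by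
  intro v a b c ha hb hc
  obtain ⟨m, -, ⟨e⟩⟩ := h v
  have hv : v ∈ (_root_.ball G v R).verts := ⟨.rfl, by simp⟩
  have hmem {x : V} (hx : G.Adj v x) : x ∈ (_root_.ball G v R).verts :=
    ⟨hx.reachable, by rw [dist_eq_one_iff_adj.2 hx]; omega⟩
  have hadj {x : V} (hx : G.Adj v x) :
      (_root_.ball G v R).coe.Adj ⟨v, hv⟩ ⟨x, hmem hx⟩ :=
    ⟨hx, hv, hmem hx, by rw [dist_self, dist_eq_one_iff_adj.2 hx]; omega⟩
  simpa only [Subtype.ext_iff] using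
    MaxDegreeLeTwo.of_iso e (maxDegreeLeTwo_pathGraph m) (hadj ha) (hadj hb) (hadj hc)

theorem isPathGraph_ball_pathGraph {n : ℕ} (v : Fin n) (R : ℕ) :
    IsPathGraph (_root_.ball (pathGraph n) v R).coe := by
  have hG := pathGraph_preconnected n
  set a := v.val - R / 2
  set b := min (v.val + R / 2) (n - 1)
  have hmem (x : Fin n) : x ∈ (_root_.ball (pathGraph n) v R).verts ↔ a ≤ x ∧ x ≤ b := by
    rw [mem_ball_verts hG, pathGraph_dist, Nat.dist]
    omega
  refine ⟨b - a + 1, by omega, ⟨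
    { toFun x := ⟨x.1 - a, by have := (hmem x.1).1 x.2; omega⟩
      invFun j := ⟨⟨j + a, by omega⟩, (hmem _).2 (by simp only; omega)⟩
      left_inv x := by have := (hmem x.1).1 x.2; ext; simp only; omega
      right_inv j := by ext; simp only; omega
      map_rel_iff' := ?_ }⟩⟩
  rintro ⟨x, hx⟩ ⟨y, hy⟩
  rw [hmem] at hx hy
  simp only [Equiv.coe_fn_mk, Subgraph.coe_adj, ball_adj hG, pathGraph_adj, pathGraph_dist,
    Nat.dist]
  omega

theorem isPathGraph_ball_cycleGraph_zero {n R : ℕ} [NeZero n] (hn : 2 ≤ n) (hR : R < n) :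
    IsPathGraph (_root_.ball (cycleGraph n) 0 R).coe := by
  have hG : (cycleGraph n).Preconnected := cycleGraph_preconnected
  set k := R / 2
  have hmem (x : Fin n) :
      x ∈ (_root_.ball (cycleGraph n) 0 R).verts ↔ x.val ≤ k ∨ n - k ≤ x.val := by
    rw [mem_ball_verts hG, cycleGraph_dist_zero hn]
    omega
  -- The arc `n - k, …, n - 1, 0, …, k` is listed in order by `x ↦ x + k mod n`.
  refine ⟨2 * k + 1, by omega, ⟨
    { toFun x := ⟨if x.1.val ≤ k then x.1.val + k else x.1.val + k - n,
        by have := (hmem x.1).1 x.2; have := x.1.2; split_ifs <;> omega⟩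
      invFun j := ⟨⟨if k ≤ j.val then j.val - k else j.val + n - k, by split_ifs <;> omega⟩,
        (hmem _).2 (by simp only; split_ifs <;> omega)⟩
      left_inv x := by
        have := (hmem x.1).1 x.2; have := x.1.2
        ext; simp only; split_ifs <;> omega
      right_inv j := by ext; simp only; split_ifs <;> omega
      map_rel_iff' := ?_ }⟩⟩
  rintro ⟨x, hx⟩ ⟨y, hy⟩
  rw [hmem] at hx hy
  have := x.2
  have := y.2
  simp only [Equiv.coe_fn_mk, Subgraph.coe_adj, ball_adj hG, pathGraph_adj, cycleGraph_adj_iff hn,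
    cycleGraph_dist_zero hn]
  -- If `n = 2k + 1`, the edge joining the two ends `k` and `k + 1` has distance sum `2k = R`,
  -- so it is not an edge of the ball.
  split_ifs <;> omega

theorem isPathGraph_ball_cycleGraph_iff {n R : ℕ} [NeZero n] (v : Fin n) :
    IsPathGraph (_root_.ball (cycleGraph n) v R).coe ↔
      IsPathGraph (_root_.ball (cycleGraph n) 0 R).coe := by
  rw [isPathGraph_ball_iff (cycleGraph.rotate (-v)) v R]
  rw [show cycleGraph.rotate (-v) v = 0 from add_neg_cancel v]

theorem isPathGraph_ball_cycleGraph {n R : ℕ} (hn : 2 ≤ n) (hR : R < n) (v : Fin n) :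
    IsPathGraph (_root_.ball (cycleGraph n) v R).coe := by
  have : NeZero n := ⟨by omega⟩
  exact (isPathGraph_ball_cycleGraph_iff v).2 (isPathGraph_ball_cycleGraph_zero hn hR)

theorem ball_cycleGraph_zero_eq_top {n R : ℕ} [NeZero n] (hn : 2 ≤ n) (hR : n ≤ R) :
    _root_.ball (cycleGraph n) 0 R = ⊤ := by
  have hG : (cycleGraph n).Preconnected := cycleGraph_preconnected
  ext x y
  · simp only [mem_ball_verts hG, cycleGraph_dist_zero hn, Subgraph.verts_top, Set.mem_univ,
      iff_true]
    omega
  · simp only [ball_adj hG, Subgraph.top_adj, cycleGraph_dist_zero hn, and_iff_left_iff_imp]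
    intro h
    rw [cycleGraph_adj_iff hn, pathGraph_adj] at h
    omega

theorem IsPathGraph.of_ball_cycleGraph {n R : ℕ} (hn : 2 ≤ n) (hR : n ≤ R) {v : Fin n}
    (h : IsPathGraph (_root_.ball (cycleGraph n) v R).coe) : IsPathGraph (cycleGraph n) := by
  have : NeZero n := ⟨by omega⟩
  rw [isPathGraph_ball_cycleGraph_iff, ball_cycleGraph_zero_eq_top hn hR] at h
  exact h.of_iso Subgraph.topIso.symm

end

/-- A connected graph has all its `2r/2`-balls being paths iff it is a path
or a cycle of length greater than `2r`. -/
theorem stmt_0 {V : Type*} [Fintype V] (G : SimpleGraph V) (hconn : G.Connected)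
    (r : ℕ) (hr : 1 ≤ r) :
    (∀ v : V, IsPathGraph (_root_.ball G v (2 * r)).coe) ↔
      (IsPathGraph G ∨ ∃ n : ℕ, 2 * r < n ∧ Nonempty (G ≃g cycleGraph n)) := by
  refine ⟨fun h => ?_, ?_⟩
  · have hdeg := maxDegreeLeTwo_of_isPathGraph_ball (by omega) h
    by_cases hleaf : ∃ v, (G.neighborSet v).Subsingleton
    · obtain ⟨v, hv⟩ := hleaf
      exact .inl (isPathGraph_of_maxDegreeLeTwo hconn hdeg hv)
    · simp only [not_exists, Set.not_subsingleton_iff] at hleaf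
      obtain ⟨n, hn, ⟨e⟩⟩ := exists_iso_cycleGraph_of_maxDegreeLeTwo hconn hdeg hleaf
      refine .inr ⟨n, lt_of_not_ge fun hle => ?_, ⟨e⟩⟩
      obtain ⟨v⟩ := hconn.nonempty
      have hcyc := ((isPathGraph_ball_iff e v _).1 (h v)).of_ball_cycleGraph (by omega) hle
      obtain ⟨u, hu⟩ := (hcyc.of_iso e).exists_subsingleton_neighborSet
      exact (hleaf u).not_subsingleton hu
  · rintro (⟨n, -, ⟨e⟩⟩ | ⟨n, hn, ⟨e⟩⟩) v
    · exact (isPathGraph_ball_iff e v _).2 (isPathGraph_ball_pathGraph _ _)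
    · exact (isPathGraph_ball_iff e v _).2 (isPathGraph_ball_cycleGraph (by omega) hn _)
end

section
/- Let G be a finite graph. Then G is 3-locally interval if and only if G is wheel-free and contains no induced subgraph consisting of a chordal non-interval graph F together with one additional vertex adjacent to every vertex of F. -/
open SimpleGraph

/-!
The `3/2`-ball around `v` is the subgraph induced on `v` and its neighbours, that is, the cone
over the neighbourhood `N(v)`. In a finite graph a cone is an interval graph iff its base is (give
the apex an interval covering all the others), so `G` is 3-locally interval iff every `N(v)` is
an interval graph. Interval graphs are chordal: the vertex whose interval has the rightmost left
endpoint is simplicial, and no vertex of a cycle of length at least 4 is. An induced wheel is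
exactly an induced cycle of length at least 4 inside some `N(v)`, so wheel-freeness says that
every `N(v)` is chordal, and the second condition then says that every `N(v)` is interval.
-/

section

variable {V W : Type*} {G : SimpleGraph V} {H : SimpleGraph W}

lemma hasInducedCopy_iff_isIndContained : HasInducedCopy G H ↔ H ⊴ G := by
  rw [isIndContained_iff_exists_iso_induce]
  exact exists_congr fun _ => ⟨fun ⟨e⟩ => ⟨e.symm⟩, fun ⟨e⟩ => ⟨e.symm⟩⟩

lemma IsIntervalGraph.of_embedding (f : H ↪g G) (hG : IsIntervalGraph G) :
    IsIntervalGraph H := by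
  obtain ⟨I, hI, hadj⟩ := hG
  exact ⟨I ∘ f, fun w => hI (f w), fun u v huv => f.map_adj_iff.symm.trans
    (hadj _ _ (f.injective.ne huv))⟩

lemma IsIntervalGraph.of_isIndContained (h : H ⊴ G) (hG : IsIntervalGraph G) :
    IsIntervalGraph H :=
  hG.of_embedding h.some

lemma IsIntervalGraph.congr (e : G ≃g H) : IsIntervalGraph G ↔ IsIntervalGraph H :=
  ⟨.of_embedding e.symm.toEmbedding, .of_embedding e.toEmbedding⟩

lemma IsIntervalGraph.exists_isClique_neighborSet [Finite V] [Nonempty V]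
    (hG : IsIntervalGraph G) : ∃ k, G.IsClique (G.neighborSet k) := by
  obtain ⟨I, hI, hadj⟩ := hG
  choose a b hab hIcc using hI
  obtain ⟨k, hk⟩ := Finite.exists_max a
  -- `I k` has the rightmost left endpoint, so every interval meeting it contains `a k`.
  have mem_of_adj : ∀ x, G.Adj k x → a k ∈ I x := by
    intro x hx
    obtain ⟨y, hyk, hyx⟩ := (hadj k x hx.ne).mp hx
    rw [hIcc] at hyx hyk ⊢
    exact ⟨hk x, hyk.1.trans hyx.2⟩
  exact ⟨k, fun x hx y hy hxy => (hadj x y hxy).mpr ⟨a k, mem_of_adj x hx, mem_of_adj y hy⟩⟩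

open Fin.CommRing in
lemma not_isClique_cycleGraph_neighborSet {n : ℕ} (hn : 4 ≤ n) (k : Fin n) :
    ¬ (cycleGraph n).IsClique ((cycleGraph n).neighborSet k) := by
  obtain ⟨m, rfl⟩ : ∃ m, n = m + 2 + 2 := ⟨n - 4, by omega⟩
  rw [cycleGraph_neighborSet, isClique_pair]
  -- the two neighbours `k ∓ 1` differ by `2`, which is neither `0` nor `±1` modulo `n ≥ 4`
  simp only [cycleGraph_adj, add_sub_sub_cancel, Classical.not_imp]
  have two_ne_zero : (2 : Fin (m + 2 + 2)) ≠ 0 := by simp [Fin.ext_iff, Nat.mod_eq_of_lt]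
  have three_ne_zero : (3 : Fin (m + 2 + 2)) ≠ 0 := by simp [Fin.ext_iff, Nat.mod_eq_of_lt]
  refine ⟨fun h => two_ne_zero ?_, not_or.mpr ⟨fun h => three_ne_zero ?_, by simp⟩⟩
  · linear_combination -h
  · linear_combination -h

lemma not_isIntervalGraph_cycleGraph {n : ℕ} (hn : 4 ≤ n) : ¬ IsIntervalGraph (cycleGraph n) :=
  fun h =>
    have : Nonempty (Fin n) := ⟨⟨0, by omega⟩⟩
    (h.exists_isClique_neighborSet).elim fun k hk => not_isClique_cycleGraph_neighborSet hn k hk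

lemma IsIntervalGraph.isChordal (hG : IsIntervalGraph G) : IsChordal G :=
  fun _ hn hC => not_isIntervalGraph_cycleGraph hn
    (hG.of_isIndContained (hasInducedCopy_iff_isIndContained.mp hC))

@[simp]
lemma cone_adj_none_some (x : V) : (cone G).Adj none (some x) := by
  simp [cone, fromRel_adj]

@[simp]
lemma cone_adj_some_none (x : V) : (cone G).Adj (some x) none :=
  (cone_adj_none_some x).symm

@[simp]
lemma cone_adj_some_some {x y : V} : (cone G).Adj (some x) (some y) ↔ G.Adj x y := by
  simpa [cone, G.adj_comm y x] using fun h : G.Adj x y => h.ne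

def SimpleGraph.Embedding.coneSome : G ↪g cone G where
  toFun := some
  inj' := Option.some_injective V
  map_rel_iff' := cone_adj_some_some

def SimpleGraph.Embedding.coneElim (f : H ↪g G) (v : V) (hv : ∀ x, G.Adj v (f x)) :
    cone H ↪g G where
  toFun o := o.elim v f
  inj' := by
    rintro (_ | x) (_ | y) h
    · rfl
    · exact absurd h (hv y).ne
    · exact absurd h.symm (hv x).ne
    · exact congrArg some (f.injective h)
  map_rel_iff' := by
    rintro (_ | x) (_ | y)
    · simp
    · exact iff_of_true (hv y) (cone_adj_none_some y)
    · exact iff_of_true (hv x).symm (cone_adj_some_none x)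
    · exact f.map_adj_iff.trans cone_adj_some_some.symm

lemma SimpleGraph.Embedding.range_coneElim (f : H ↪g G) (v : V) (hv : ∀ x, G.Adj v (f x)) :
    Set.range (f.coneElim v hv) = insert v (Set.range f) :=
  Option.range_elim v f

lemma IsIntervalGraph.cone [Finite V] (hG : IsIntervalGraph G) : IsIntervalGraph (cone G) := by
  obtain ⟨I, hI, hadj⟩ := hG
  choose a b hab hIcc using hI
  obtain ⟨c, hc⟩ := (Set.finite_range a).bddBelow
  obtain ⟨d, hd⟩ := (Set.finite_range b).bddAbove
  have apex_meets : ∀ y, (Set.Icc c (max c d) ∩ I y).Nonempty := fun y =>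
    ⟨a y, ⟨hc ⟨y, rfl⟩, (hab y).trans ((hd ⟨y, rfl⟩).trans (le_max_right c d))⟩,
      hIcc y ▸ ⟨le_rfl, hab y⟩⟩
  refine ⟨fun o => o.elim (Set.Icc c (max c d)) I, ?_, ?_⟩
  · rintro (_ | x)
    · exact ⟨c, max c d, le_max_left c d, rfl⟩
    · exact ⟨a x, b x, hab x, hIcc x⟩
  · rintro (_ | x) (_ | y) hxy
    · exact absurd rfl hxy
    · simpa using apex_meets y
    · simpa [Set.inter_comm] using apex_meets x
    · simpa using hadj x y (by simpa using hxy)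

lemma isIntervalGraph_cone_iff [Finite V] : IsIntervalGraph (cone G) ↔ IsIntervalGraph G :=
  ⟨.of_embedding Embedding.coneSome, .cone⟩

lemma cone_isIndContained_iff :
    cone H ⊴ G ↔ ∃ v, H ⊴ G.induce (G.neighborSet v) := by
  constructor
  · rintro ⟨e⟩
    let f := e.comp Embedding.coneSome
    have range_subset : Set.range f ⊆ G.neighborSet (e none) := by
      rintro _ ⟨x, rfl⟩
      exact e.map_adj_iff.mpr (cone_adj_none_some x)
    exact ⟨e none, ⟨(G.induceHomOfLE range_subset).comp f.isoInduceRange.toEmbedding⟩⟩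
  · rintro ⟨v, ⟨f⟩⟩
    exact ⟨((Embedding.induce _).comp f).coneElim v fun x => (f x).2⟩

lemma wheel_eq_cone (n : ℕ) : wheel n = cone (cycleGraph n) := rfl

lemma wheelFree_iff_forall_isChordal_induce_neighborSet :
    WheelFree G ↔ ∀ v, IsChordal (G.induce (G.neighborSet v)) := by
  simp only [WheelFree, IsChordal, hasInducedCopy_iff_isIndContained, wheel_eq_cone,
    cone_isIndContained_iff, not_exists]
  exact ⟨fun h v n hn => h n hn v, fun h n hn v => h v n hn⟩

lemma reachable_and_dist_le_one_iff {v x : V} :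
    G.Reachable v x ∧ G.dist v x ≤ 1 ↔ x ∈ insert v (G.neighborSet v) := by
  constructor
  · rintro ⟨hr, hd⟩
    interval_cases h : G.dist v x
    · exact .inl (hr.dist_eq_zero_iff.mp h).symm
    · exact .inr (dist_eq_one_iff_adj.mp h)
  · rintro (rfl | h)
    · simp
    · exact ⟨h.reachable, (dist_eq_one_iff_adj.mpr h).le⟩

lemma ball_three_eq_induce (v : V) :
    _root_.ball G v 3 = (⊤ : G.Subgraph).induce (insert v (G.neighborSet v)) := by
  ext x y
  · exact reachable_and_dist_le_one_iff
  · simp only [_root_.ball, Subgraph.induce_adj, Subgraph.top_adj, ← reachable_and_dist_le_one_iff]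
    constructor
    · rintro ⟨h, hx, hy, -⟩
      exact ⟨hx, hy, h⟩
    · rintro ⟨hx, hy, h⟩
      exact ⟨h, hx, hy, by omega⟩

lemma isIntervalGraph_induce_insert_iff {s : Set V} {v : V} (hs : ∀ u ∈ s, G.Adj v u) :
    IsIntervalGraph (G.induce (insert v s)) ↔ IsIntervalGraph (cone (G.induce s)) := by
  let E := (Embedding.induce s).coneElim v fun u => hs u u.2
  have range_E : Set.range E = insert v s :=
    (Embedding.range_coneElim _ v _).trans (congrArg _ Subtype.range_coe)
  rw [← range_E]
  exact (IsIntervalGraph.congr E.isoInduceRange).symm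

lemma locallyInterval_three_iff [Finite V] :
    LocallyInterval G 3 ↔ ∀ v, IsIntervalGraph (G.induce (G.neighborSet v)) := by
  refine forall_congr' fun v => ?_
  rw [ball_three_eq_induce, ← induce_eq_coe_induce_top]
  exact (isIntervalGraph_induce_insert_iff fun _ h => h).trans isIntervalGraph_cone_iff

end

/-- A finite graph is 3-locally interval iff it is wheel-free and contains no
induced subgraph consisting of a chordal non-interval graph together with one additional vertex
adjacent to all of its vertices. -/
theorem stmt_9 {V : Type*} [Fintype V] (G : SimpleGraph V) :
    LocallyInterval G 3 ↔
      (WheelFree G ∧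
        ¬ ∃ (s : Set V) (v : V), v ∉ s ∧ (∀ u ∈ s, G.Adj v u) ∧
          IsChordal (G.induce s) ∧ ¬ IsIntervalGraph (G.induce s)) := by
  rw [locallyInterval_three_iff, wheelFree_iff_forall_isChordal_induce_neighborSet]
  constructor
  · intro h
    refine ⟨fun v => (h v).isChordal, ?_⟩
    rintro ⟨s, v, -, hs, -, hs_not_interval⟩
    exact hs_not_interval ((h v).of_embedding (G.induceHomOfLE hs))
  · rintro ⟨h_chordal, h_no_cone⟩ v
    by_contra hv
    exact h_no_cone ⟨_, v, G.notMem_neighborSet_self, fun _ hu => hu, h_chordal v, hv⟩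
end

section
/- The long claw is 3-locally interval but is not a circular-arc graph. -/
open SimpleGraph

/-! A 3-ball is a closed neighbourhood, which in a triangle-free graph is a star; a star is an
interval graph (the centre gets a long interval, the leaves distinct points inside it).

For the second part, let `t` be a point of the cycle on a leaf's arc, hence outside the arc of the
centre `c`. Measured from `t`, a connected set of cycle vertices avoiding `t` is an integer
interval, so the arc of `c` has at most one exit `i` (`i` in, `i + 1` out) and at most one entry.
Each middle arc meets the arc of `c` and also leaves it (it meets its leaf's arc), so it contains a
cycle edge `{i, i + 1}` at an exit or entry; the three middle arcs are disjoint, so these are three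
distinct exits or entries, one too many. -/

section Ball

variable {V : Type*} {G : SimpleGraph V} {v : V}

theorem mem_ball_three_verts_iff {x : V} :
    x ∈ (_root_.ball G v 3).verts ↔ x = v ∨ G.Adj v x := by
  constructor
  · rintro ⟨hr, hd⟩
    rcases Nat.eq_zero_or_pos (G.dist v x) with h0 | hpos
    · exact .inl (hr.dist_eq_zero_iff.mp h0).symm
    · exact .inr (dist_eq_one_iff_adj.mp (by change G.dist v x ≤ 1 at hd; omega))
  · rintro (rfl | h)
    · exact ⟨Reachable.refl _, by simp⟩
    · exact ⟨h.reachable, by rw [dist_eq_one_iff_adj.mpr h]⟩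

theorem ball_three_adj_iff {x y : V} (hx : x ∈ (_root_.ball G v 3).verts)
    (hy : y ∈ (_root_.ball G v 3).verts) : (_root_.ball G v 3).Adj x y ↔ G.Adj x y :=
  ⟨fun h => h.1, fun h => ⟨h, hx, hy, by have := hx.2; have := hy.2; omega⟩⟩

theorem locallyInterval_three_of_cliqueFree [Finite V] (hG : G.CliqueFree 3) :
    LocallyInterval G 3 := by
  classical
  intro v
  obtain ⟨N, ⟨e⟩⟩ := Finite.exists_equiv_fin V
  let p : V → ℝ := fun x => (e x : ℕ)
  let I : V → Set ℝ := fun x => if x = v then Set.Icc 0 N else Set.Icc (p x) (p x)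
  have hp : ∀ x, p x ∈ Set.Icc (0 : ℝ) N :=
    fun x => ⟨by positivity, by simp [p, (e x).isLt.le]⟩
  refine ⟨fun x => I x, fun x => ?_, ?_⟩
  · by_cases hx : x.1 = v
    · exact ⟨0, N, by positivity, if_pos hx⟩
    · exact ⟨p x, p x, le_rfl, if_neg hx⟩
  rintro ⟨x, hx⟩ ⟨y, hy⟩ hne
  rw [Subgraph.coe_adj, ball_three_adj_iff hx hy]
  rcases mem_ball_three_verts_iff.mp hx with rfl | hvx <;>
    rcases mem_ball_three_verts_iff.mp hy with rfl | hvy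
  · exact absurd rfl hne
  · simp only [I, if_pos rfl, if_neg hvy.ne', Set.Icc_self, Set.inter_singleton_nonempty, hp, hvy]
  · simp only [I, if_pos rfl, if_neg hvx.ne', Set.Icc_self, Set.singleton_inter_nonempty, hp,
      hvx.symm]
  · have hxy : x ≠ y := fun h => hne (Subtype.ext h)
    have hnadj : ¬ G.Adj x y := fun h => hG {v, x, y} (is3Clique_triple_iff.mpr ⟨hvx, hvy, h⟩)
    simp only [I, if_neg hvx.ne', if_neg hvy.ne', Set.Icc_self, Set.singleton_inter_nonempty,
      Set.mem_singleton_iff, hnadj, false_iff]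
    simpa [p, Fin.val_inj] using hxy

end Ball

theorem Set.Subsingleton.not_injective_fin_three_of_mem_union {α : Type*} {s t : Set α}
    (hs : s.Subsingleton) (ht : t.Subsingleton) {f : Fin 3 → α} (hst : ∀ k, f k ∈ s ∪ t) :
    ¬ Function.Injective f := by
  intro hf
  have : (3 : ℕ∞) ≤ 1 + 1 := calc
    (3 : ℕ∞) = ENat.card (Fin 3) := by simp
    _ ≤ (Set.range f).encard := hf.encard_range
    _ ≤ (s ∪ t).encard := Set.encard_le_encard (Set.range_subset_iff.mpr hst)
    _ ≤ s.encard + t.encard := Set.encard_union_le s t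
    _ ≤ 1 + 1 := add_le_add (Set.encard_le_one_iff_subsingleton.mpr hs)
        (Set.encard_le_one_iff_subsingleton.mpr ht)
  norm_num at this

namespace SimpleGraph

variable {V : Type*} {G : SimpleGraph V}

theorem Walk.exists_mem_support_eq_of_forall_darts_le (f : V → ℕ) {x y : V} (p : G.Walk x y)
    (hf : ∀ d ∈ p.darts, f d.snd ≤ f d.fst + 1) {c : ℕ} (hx : f x ≤ c) (hy : c ≤ f y) :
    ∃ z ∈ p.support, f z = c := by
  induction p with
  | nil => exact ⟨_, List.mem_singleton_self _, by omega⟩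
  | @cons u v w h p ih =>
    rw [Walk.darts_cons, List.forall_mem_cons] at hf
    by_cases hu : f u = c
    · exact ⟨u, p.support.mem_cons_self, hu⟩
    · obtain ⟨z, hz, rfl⟩ := ih hf.2 (by have : f v ≤ f u + 1 := hf.1; omega) hy
      exact ⟨z, List.mem_cons_of_mem _ hz, rfl⟩

theorem Subgraph.Preconnected.exists_walk_support_subset {H : G.Subgraph} (hH : H.Preconnected)
    {x y : V} (hx : x ∈ H.verts) (hy : y ∈ H.verts) :
    ∃ p : G.Walk x y, ∀ z ∈ p.support, z ∈ H.verts := by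
  obtain ⟨p, hp⟩ := (Subgraph.preconnected_iff_forall_exists_walk_subgraph H).mp hH hx hy
  exact ⟨p, fun z hz => hp.1 ((p.mem_verts_toSubgraph).mpr hz)⟩

theorem Subgraph.connected_of_isPathGraph {H : G.Subgraph} (hH : IsPathGraph H.coe) :
    H.Connected := by
  obtain ⟨_ | k, hk, ⟨e⟩⟩ := hH
  · omega
  · exact Subgraph.connected_iff'.mpr (e.connected_iff.mpr (pathGraph_connected k))

end SimpleGraph

section CycleGraph

variable {n : ℕ}

theorem eq_add_one_or_eq_add_one_of_cycleGraph_adj {a b : Fin (n + 1)}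
    (h : (cycleGraph (n + 1)).Adj a b) : b = a + 1 ∨ a = b + 1 := by
  cases n with
  | zero => exact absurd h cycleGraph_one_adj
  | succ n =>
    rw [cycleGraph_adj, sub_eq_iff_eq_add, sub_eq_iff_eq_add] at h
    exact h.symm.imp (fun h => h.trans (add_comm _ _)) (fun h => h.trans (add_comm _ _))

theorem Fin.val_add_one_sub {a t : Fin (n + 1)} (h : a + 1 ≠ t) :
    (a + 1 - t).val = (a - t).val + 1 := by
  rw [add_sub_right_comm, Fin.val_add_one, if_neg]
  intro hlast
  rw [← sub_add_cancel a t, add_right_comm, hlast, Fin.last_add_one, zero_add] at h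
  exact h rfl

theorem Fin.val_sub_eq_of_add_one_eq {a t : Fin (n + 1)} (h : a + 1 = t) : (a - t).val = n := by
  rw [← h]
  simp

end CycleGraph


section Arc

variable {n : ℕ} {H : (cycleGraph (n + 1)).Subgraph} {t : Fin (n + 1)}

theorem val_sub_le_val_sub_add_one_of_adj {a b : Fin (n + 1)}
    (hab : (cycleGraph (n + 1)).Adj a b) (ha : a ≠ t) (hb : b ≠ t) :
    (b - t).val ≤ (a - t).val + 1 := by
  rcases eq_add_one_or_eq_add_one_of_cycleGraph_adj hab with rfl | rfl
  · rw [Fin.val_add_one_sub hb]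
  · rw [Fin.val_add_one_sub ha]
    omega

theorem exists_mem_support_val_sub_eq {x y : Fin (n + 1)} (p : (cycleGraph (n + 1)).Walk x y)
    (ht : t ∉ p.support) {c : ℕ} (hx : (x - t).val ≤ c) (hy : c ≤ (y - t).val) :
    ∃ z ∈ p.support, (z - t).val = c :=
  p.exists_mem_support_eq_of_forall_darts_le (fun z => (z - t).val)
    (fun _ hd => val_sub_le_val_sub_add_one_of_adj (Dart.adj _)
      (ne_of_mem_of_not_mem (p.dart_fst_mem_support_of_mem_darts hd) ht)
      (ne_of_mem_of_not_mem (p.dart_snd_mem_support_of_mem_darts hd) ht)) hx hy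

theorem val_sub_le_of_mem_of_add_one_not_mem (hH : H.Preconnected) (ht : t ∉ H.verts)
    {i s : Fin (n + 1)} (hi : i ∈ H.verts) (hi' : i + 1 ∉ H.verts) (hs : s ∈ H.verts) :
    (s - t).val ≤ (i - t).val := by
  by_contra! hlt
  by_cases hit : i + 1 = t
  · have := (s - t).isLt
    rw [Fin.val_sub_eq_of_add_one_eq hit] at hlt
    omega
  obtain ⟨p, hp⟩ := hH.exists_walk_support_subset hi hs
  obtain ⟨z, hz, hzt⟩ := exists_mem_support_val_sub_eq p (fun h => ht (hp t h))
    (c := (i + 1 - t).val) (by rw [Fin.val_add_one_sub hit]; omega)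
    (by rw [Fin.val_add_one_sub hit]; omega)
  exact hi' ((sub_left_injective (Fin.ext hzt) : z = i + 1) ▸ hp z hz)

theorem val_add_one_sub_le_of_not_mem_of_add_one_mem (hH : H.Preconnected) (ht : t ∉ H.verts)
    {i s : Fin (n + 1)} (hi : i ∉ H.verts) (hi' : i + 1 ∈ H.verts) (hs : s ∈ H.verts) :
    (i + 1 - t).val ≤ (s - t).val := by
  by_contra! hlt
  have hit : i + 1 ≠ t := fun h => ht (h ▸ hi')
  rw [Fin.val_add_one_sub hit] at hlt
  obtain ⟨p, hp⟩ := hH.exists_walk_support_subset hs hi'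
  obtain ⟨z, hz, hzt⟩ := exists_mem_support_val_sub_eq p (fun h => ht (hp t h))
    (c := (i - t).val) (by omega) (by rw [Fin.val_add_one_sub hit]; omega)
  exact hi ((sub_left_injective (Fin.ext hzt) : z = i) ▸ hp z hz)

theorem subsingleton_setOf_mem_and_add_one_not_mem (hH : H.Preconnected) (ht : t ∉ H.verts) :
    {i | i ∈ H.verts ∧ i + 1 ∉ H.verts}.Subsingleton := fun _ hi _ hj =>
  sub_left_injective <| Fin.ext <| le_antisymm
    (val_sub_le_of_mem_of_add_one_not_mem hH ht hj.1 hj.2 hi.1)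
    (val_sub_le_of_mem_of_add_one_not_mem hH ht hi.1 hi.2 hj.1)

theorem subsingleton_setOf_not_mem_and_add_one_mem (hH : H.Preconnected) (ht : t ∉ H.verts) :
    {i | i ∉ H.verts ∧ i + 1 ∈ H.verts}.Subsingleton := fun _ hi _ hj =>
  add_right_cancel <| sub_left_injective <| Fin.ext <| le_antisymm
    (val_add_one_sub_le_of_not_mem_of_add_one_mem hH ht hi.1 hi.2 hj.2)
    (val_add_one_sub_le_of_not_mem_of_add_one_mem hH ht hj.1 hj.2 hi.2)

theorem exists_add_one_mem_and_mem_boundary (hH : H.Preconnected) (S : Set (Fin (n + 1)))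
    {x y : Fin (n + 1)} (hx : x ∈ H.verts) (hxS : x ∈ S) (hy : y ∈ H.verts) (hyS : y ∉ S) :
    ∃ i, i ∈ H.verts ∧ i + 1 ∈ H.verts ∧
      i ∈ {i | i ∈ S ∧ i + 1 ∉ S} ∪ {i | i ∉ S ∧ i + 1 ∈ S} := by
  obtain ⟨p, hp⟩ := hH.exists_walk_support_subset hx hy
  obtain ⟨d, hd, hdS, hdS'⟩ := p.exists_boundary_dart S hxS hyS
  have hfst := hp _ (p.dart_fst_mem_support_of_mem_darts hd)
  have hsnd := hp _ (p.dart_snd_mem_support_of_mem_darts hd)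
  rcases eq_add_one_or_eq_add_one_of_cycleGraph_adj d.adj with h | h
  · exact ⟨d.fst, hfst, h ▸ hsnd, .inl ⟨hdS, h ▸ hdS'⟩⟩
  · exact ⟨d.snd, hsnd, h ▸ hfst, .inr ⟨hdS', h ▸ hdS⟩⟩

end Arc

theorem not_isCircularArcGraph_of_three_branches {V : Type*} {G : SimpleGraph V} {c : V}
    {m l : Fin 3 → V} (hm : Function.Injective m) (hcm : ∀ k, G.Adj c (m k))
    (hmm : ∀ k k', ¬ G.Adj (m k) (m k')) (hml : ∀ k, G.Adj (m k) (l k))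
    (hlc : ∀ k, l k ≠ c) (hcl : ∀ k, ¬ G.Adj c (l k)) : ¬ IsCircularArcGraph G := by
  rintro ⟨n, -, A, hpath, hadj⟩
  have hconn : ∀ v, (A v).Connected := fun v => Subgraph.connected_of_isPathGraph (hpath v)
  have hmeet : ∀ {u v}, G.Adj u v → ∃ x, x ∈ (A u).verts ∩ (A v).verts :=
    fun h => (hadj _ _ h.ne).mp h
  have hdisj : ∀ {u v x}, u ≠ v → ¬ G.Adj u v → x ∈ (A u).verts → x ∉ (A v).verts :=
    fun huv h hu hv => h ((hadj _ _ huv).mpr ⟨_, hu, hv⟩)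
  obtain ⟨t, ht⟩ := (hconn (l 0)).nonempty
  rcases n with _ | n
  · exact t.elim0
  have htc : t ∉ (A c).verts := hdisj (hlc 0) (fun h => hcl 0 h.symm) ht
  have hcross : ∀ k, ∃ i, i ∈ (A (m k)).verts ∧ i + 1 ∈ (A (m k)).verts ∧
      i ∈ {i | i ∈ (A c).verts ∧ i + 1 ∉ (A c).verts} ∪
        {i | i ∉ (A c).verts ∧ i + 1 ∈ (A c).verts} := by
    intro k
    obtain ⟨x, hxm, hxc⟩ := hmeet (hcm k).symm
    obtain ⟨y, hym, hyl⟩ := hmeet (hml k)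
    exact exists_add_one_mem_and_mem_boundary (hconn _).preconnected _ hxm hxc hym
      (hdisj (hlc k) (fun h => hcl k h.symm) hyl)
  choose i hi using hcross
  refine (subsingleton_setOf_mem_and_add_one_not_mem (hconn c).preconnected htc
    |>.not_injective_fin_three_of_mem_union
      (subsingleton_setOf_not_mem_and_add_one_mem (hconn c).preconnected htc)
      fun k => (hi k).2.2) fun k k' hkk' => ?_
  by_contra hne
  exact hdisj (hm.ne hne) (hmm k k') (hi k).1 (hkk' ▸ (hi k').1)

instance : DecidableRel longClaw.Adj := inferInstanceAs (DecidableRel (fromEdgeSet _).Adj)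

theorem longClaw_colorable_two : longClaw.Colorable 2 :=
  (Coloring.mk (fun v : Fin 7 => (if v ∈ ({1, 2, 3} : Finset (Fin 7)) then 0 else 1 : Fin 2))
    (by decide)).colorable

theorem not_isCircularArcGraph_longClaw : ¬ IsCircularArcGraph longClaw :=
  not_isCircularArcGraph_of_three_branches (c := 0) (m := ![1, 2, 3]) (l := ![4, 5, 6])
    (by decide) (by decide) (by decide) (by decide) (by decide) (by decide)

/-- The long claw is 3-locally interval but is not a circular-arc graph. -/
theorem stmt_12 : LocallyInterval longClaw 3 ∧ ¬ IsCircularArcGraph longClaw :=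
  ⟨locallyInterval_three_of_cliqueFree (longClaw_colorable_two.cliqueFree (by norm_num)),
    not_isCircularArcGraph_longClaw⟩
end

section
/- Every finite 3-acyclic circular-arc graph is 3-locally interval. -/
open SimpleGraph

/-!
Unroll the cycle `ℤ/n` to `ℤ`: an arc lifts to an integer interval, determined up to a shift
by `n`. Fix a lift `I_v` of the arc of `v` and lift the arc of every `x` in the ball (that is, `v`
or a neighbour of `v`) to an interval `I_x` meeting `I_v`. If the arcs of `x` and `y` meet but
`I_x` and `I_y` do not, then some point of `I_x` lies at least `n` beyond a point of `I_y`, and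
`I_v`, `I_x`, `I_y + n` together cover a whole period, so the arcs of `v`, `x`, `y` cover the
cycle, contradicting 3-acyclicity. Hence the intervals `I_x` form an interval model of the ball.
-/

open Fin.CommRing

lemma Fin.exists_mem_Ico_intCast_eq {n : ℕ} [NeZero n] (c : ℤ) (b : Fin n) :
    ∃ z ∈ Set.Ico c (c + n), (z : Fin n) = b :=
  ⟨c + (b - c).val, ⟨by omega, by have := (b - c).isLt; omega⟩, by simp⟩

namespace SimpleGraph

variable {n : ℕ} [NeZero n]

lemma cycleGraph_adj_eq_add_one_or_eq_sub_one {u v : Fin n} (h : (cycleGraph n).Adj u v) :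
    v = u + 1 ∨ v = u - 1 := by
  have eq_one : ∀ a : Fin n, a.val = 1 → a = 1 := fun a ha =>
    Fin.ext (by rw [ha, Fin.val_one', Nat.mod_eq_of_lt (by omega)])
  rcases cycleGraph_adj'.1 h with h | h
  · right
    rw [← eq_one _ h]
    abel
  · left
    rw [← eq_one _ h]
    abel

lemma cycleGraph_sub_eq_sub_of_adj_of_adj {u v w : Fin n} (huv : (cycleGraph n).Adj u v)
    (hvw : (cycleGraph n).Adj v w) (hwu : w ≠ u) : w - v = v - u := by
  rcases cycleGraph_adj_eq_add_one_or_eq_sub_one huv with rfl | rfl <;>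
  rcases cycleGraph_adj_eq_add_one_or_eq_sub_one hvw with rfl | rfl
  · ring
  · exact (hwu (by ring)).elim
  · exact (hwu (by ring)).elim
  · ring

lemma cycleGraph.exists_eq_intCast_add_mul {m : ℕ} {w : ℕ → Fin n}
    (hadj : ∀ i, i + 1 < m → (cycleGraph n).Adj (w i) (w (i + 1)))
    (hback : ∀ i, i + 2 < m → w (i + 2) ≠ w i) :
    ∃ c e : ℤ, (e = 1 ∨ e = -1) ∧ ∀ i < m, w i = ((c + e * i : ℤ) : Fin n) := by
  obtain ⟨e, he, hw₁⟩ : ∃ e : ℤ, (e = 1 ∨ e = -1) ∧ (1 < m → w 1 = w 0 + e) := by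
    by_cases hm : 1 < m
    · rcases cycleGraph_adj_eq_add_one_or_eq_sub_one (hadj 0 hm) with h | h
      · exact ⟨1, .inl rfl, fun _ => by simpa using h⟩
      · exact ⟨-1, .inr rfl, fun _ => by simpa [sub_eq_add_neg] using h⟩
    · exact ⟨1, .inl rfl, fun h => absurd h hm⟩
  have step : ∀ i, i + 1 < m → w (i + 1) = w i + e := by
    intro i
    induction i with
    | zero => simpa using hw₁
    | succ i ih =>
      intro hi
      have := cycleGraph_sub_eq_sub_of_adj_of_adj (hadj i (by omega)) (hadj (i + 1) hi)
        (hback i hi)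
      rw [ih (by omega)] at this ⊢
      linear_combination this
  refine ⟨(w 0).val, e, he, fun i => ?_⟩
  induction i with
  | zero => simp
  | succ i ih =>
    intro hi
    rw [step i hi, ih (by omega)]
    push_cast
    ring

/-- The integer interval `[l, r]` unrolls the arc `S` of the `n`-cycle. -/
structure IsArcLift (S : (cycleGraph n).Subgraph) (l r : ℤ) : Prop where
  le : l ≤ r
  verts_eq : S.verts = (↑) '' Set.Icc l r
  adj : ∀ z ∈ Set.Ico l r, S.Adj z (z + 1)

lemma exists_isArcLift_of_eq_intCast {S : (cycleGraph n).Subgraph} {m : ℕ} (hm : 1 ≤ m)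
    {c e : ℤ} (he : e = 1 ∨ e = -1)
    (hverts : ∀ p, p ∈ S.verts ↔ ∃ i < m, ((c + e * i : ℤ) : Fin n) = p)
    (hadj : ∀ i, i + 1 < m → S.Adj ((c + e * i : ℤ) : Fin n) ((c + e * (i + 1 : ℕ) : ℤ) : Fin n)) :
    ∃ l r, IsArcLift S l r := by
  rcases he with rfl | rfl
  · refine ⟨c, c + m - 1, by omega, Set.ext fun p => ?_, fun z ⟨hz, hz'⟩ => ?_⟩
    · rw [hverts]
      constructor
      · rintro ⟨i, hi, rfl⟩
        exact ⟨c + 1 * i, ⟨by omega, by omega⟩, rfl⟩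
      · rintro ⟨z, ⟨hz, hz'⟩, rfl⟩
        exact ⟨(z - c).toNat, by omega, by congr 1; omega⟩
    · have h := hadj (z - c).toNat (by omega)
      rwa [show c + 1 * ((z - c).toNat : ℕ) = z by omega,
        show c + 1 * (((z - c).toNat + 1 : ℕ) : ℤ) = z + 1 by omega, Int.cast_add,
        Int.cast_one] at h
  · refine ⟨c - (m - 1), c, by omega, Set.ext fun p => ?_, fun z ⟨hz, hz'⟩ => ?_⟩
    · rw [hverts]
      constructor
      · rintro ⟨i, hi, rfl⟩
        exact ⟨c + -1 * i, ⟨by omega, by omega⟩, rfl⟩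
      · rintro ⟨z, ⟨hz, hz'⟩, rfl⟩
        exact ⟨(c - z).toNat, by omega, by congr 1; omega⟩
    · have h := hadj (c - z - 1).toNat (by omega)
      rw [show c + -1 * ((c - z - 1).toNat : ℕ) = z + 1 by omega,
        show c + -1 * (((c - z - 1).toNat + 1 : ℕ) : ℤ) = z by omega, Int.cast_add,
        Int.cast_one] at h
      exact h.symm

lemma exists_isArcLift {S : (cycleGraph n).Subgraph} (hS : IsPathGraph S.coe) :
    ∃ l r, IsArcLift S l r := by
  obtain ⟨m, hm, ⟨φ⟩⟩ := hS
  have : NeZero m := ⟨by omega⟩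
  set w : ℕ → Fin n := fun i => φ.symm (i : Fin m)
  have hval {i : ℕ} (hi : i < m) : ((i : Fin m) : ℕ) = i := Fin.val_cast_of_lt hi
  have hadj : ∀ i, i + 1 < m → S.Adj (w i) (w (i + 1)) := fun i hi =>
    (φ.symm.map_adj_iff).2 (by rw [pathGraph_adj, hval (by omega), hval hi]; simp)
  obtain ⟨c, e, he, hwce⟩ := cycleGraph.exists_eq_intCast_add_mul (m := m) (w := w)
    (fun i hi => (hadj i hi).adj_sub) fun i hi heq => by
      have := congrArg Fin.val (φ.symm.injective (Subtype.ext heq))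
      rw [hval hi, hval (by omega)] at this
      omega
  refine exists_isArcLift_of_eq_intCast (c := c) hm he (fun p => ?_) fun i hi => ?_
  · constructor
    · intro hp
      refine ⟨φ ⟨p, hp⟩, (φ ⟨p, hp⟩).isLt, ?_⟩
      rw [← hwce _ (φ ⟨p, hp⟩).isLt]
      simp [w]
    · rintro ⟨i, hi, rfl⟩
      rw [← hwce i hi]
      exact (φ.symm _).2
  · rw [← hwce i (by omega), ← hwce (i + 1) hi]
    exact hadj i hi

lemma IsArcLift.exists_mem_of_mem {S : (cycleGraph n).Subgraph} {l r : ℤ} (h : IsArcLift S l r)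
    {z : ℤ} (hz : (z : Fin n) ∈ S.verts) : ∃ l' r', IsArcLift S l' r' ∧ z ∈ Set.Icc l' r' := by
  rw [h.verts_eq] at hz
  obtain ⟨y, hy, hyz⟩ := hz
  obtain ⟨k, hk⟩ := ((CharP.intCast_eq_intCast (Fin n) n).1 hyz).dvd
  refine ⟨l + n * k, r + n * k, ⟨by linarith [h.le], ?_, fun x ⟨hx, hx'⟩ => ?_⟩,
    ⟨by linarith [hy.1], by linarith [hy.2]⟩⟩
  · rw [h.verts_eq]
    ext p
    constructor
    · rintro ⟨x, ⟨hx, hx'⟩, rfl⟩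
      exact ⟨x + n * k, ⟨by linarith, by linarith⟩, by simp⟩
    · rintro ⟨x, ⟨hx, hx'⟩, rfl⟩
      exact ⟨x - n * k, ⟨by linarith, by linarith⟩, by simp⟩
  · simpa using h.adj (x - n * k) ⟨by linarith, by linarith⟩

lemma Subgraph.eq_top_of_forall_adj_add_one {H : (cycleGraph n).Subgraph}
    (h : ∀ b : Fin n, H.Adj b (b + 1)) : H = ⊤ := by
  refine le_antisymm le_top ⟨fun b _ => (h b).fst_mem, fun u v huv => ?_⟩
  rcases cycleGraph_adj_eq_add_one_or_eq_sub_one huv with rfl | rfl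
  · exact h u
  · simpa using (h (u - 1)).symm

lemma Subgraph.not_isAcyclic_of_forall_adj_add_one (hn : 3 ≤ n) {H : (cycleGraph n).Subgraph}
    (h : ∀ b : Fin n, H.Adj b (b + 1)) : ¬ H.coe.IsAcyclic := by
  rw [eq_top_of_forall_adj_add_one h]
  exact fun hac => isAcyclic_iff_free_cycleGraph.1 hac n hn Subgraph.topIso.isContained'

section ThreeArcs

variable {S₀ S₁ S₂ H : (cycleGraph n).Subgraph} {l₀ r₀ l₁ r₁ l₂ r₂ : ℤ}

lemma IsArcLift.exists_overlapping (h₀ : IsArcLift S₀ l₀ r₀) (h₁ : IsArcLift S₁ l₁ r₁)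
    (hS : (S₀.verts ∩ S₁.verts).Nonempty) : ∃ l r, IsArcLift S₁ l r ∧ l ≤ r₀ ∧ l₀ ≤ r := by
  obtain ⟨p, hp₀, hp₁⟩ := hS
  rw [h₀.verts_eq] at hp₀
  obtain ⟨z, ⟨hz, hz'⟩, rfl⟩ := hp₀
  obtain ⟨l, r, h, hzl, hzr⟩ := h₁.exists_mem_of_mem hp₁
  exact ⟨l, r, h, by omega, by omega⟩

/-- Otherwise the lifts of `S₀`, `S₁` and of `S₂` shifted by `n` cover `n` consecutive edges. -/
lemma IsArcLift.lt_add_of_isAcyclic (hn : 3 ≤ n) (h₀ : IsArcLift S₀ l₀ r₀)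
    (h₁ : IsArcLift S₁ l₁ r₁) (h₂ : IsArcLift S₂ l₂ r₂) (h₁₀ : l₁ ≤ r₀) (h₀₂ : l₀ ≤ r₂)
    (hS₀ : S₀ ≤ H) (hS₁ : S₁ ≤ H) (hS₂ : S₂ ≤ H) (hH : H.coe.IsAcyclic) : r₁ < l₂ + n := by
  by_contra! hle
  refine Subgraph.not_isAcyclic_of_forall_adj_add_one hn (fun b => ?_) hH
  obtain ⟨z, ⟨hz, hz'⟩, rfl⟩ := Fin.exists_mem_Ico_intCast_eq l₀ b
  rcases lt_or_ge z r₀ with hz₀ | hz₀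
  · exact hS₀.2 (h₀.adj z ⟨hz, hz₀⟩)
  rcases lt_or_ge z r₁ with hz₁ | hz₁
  · exact hS₁.2 (h₁.adj z ⟨by omega, hz₁⟩)
  simpa using hS₂.2 (h₂.adj (z - n) ⟨by omega, by omega⟩)

lemma IsArcLift.verts_inter_nonempty_iff (hn : 3 ≤ n) (h₀ : IsArcLift S₀ l₀ r₀)
    (h₁ : IsArcLift S₁ l₁ r₁) (h₂ : IsArcLift S₂ l₂ r₂) (h₁₀ : l₁ ≤ r₀) (h₀₁ : l₀ ≤ r₁)
    (h₂₀ : l₂ ≤ r₀) (h₀₂ : l₀ ≤ r₂) (hS₀ : S₀ ≤ H) (hS₁ : S₁ ≤ H) (hS₂ : S₂ ≤ H)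
    (hH : H.coe.IsAcyclic) : (S₁.verts ∩ S₂.verts).Nonempty ↔ l₁ ≤ r₂ ∧ l₂ ≤ r₁ := by
  rw [h₁.verts_eq, h₂.verts_eq]
  constructor
  · rintro ⟨p, ⟨z₁, ⟨hz₁, hz₁'⟩, rfl⟩, ⟨z₂, ⟨hz₂, hz₂'⟩, hz⟩⟩
    have h₁₂ := h₀.lt_add_of_isAcyclic hn h₁ h₂ h₁₀ h₀₂ hS₀ hS₁ hS₂ hH
    have h₂₁ := h₀.lt_add_of_isAcyclic hn h₂ h₁ h₂₀ h₀₁ hS₀ hS₂ hS₁ hH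
    have : z₂ - z₁ = 0 := Int.eq_zero_of_abs_lt_dvd
      ((CharP.intCast_eq_intCast (Fin n) n).1 hz.symm).dvd (abs_lt.2 ⟨by omega, by omega⟩)
    omega
  · rintro ⟨h₁₂, h₂₁⟩
    have := h₁.le
    have := h₂.le
    exact ⟨_, ⟨max l₁ l₂, ⟨le_max_left _ _, by omega⟩, rfl⟩,
      ⟨max l₁ l₂, ⟨le_max_right _ _, by omega⟩, rfl⟩⟩

end ThreeArcs

end SimpleGraph

lemma eq_or_adj_of_mem_ball_three {V : Type*} {G : SimpleGraph V} {v x : V}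
    (hx : x ∈ (_root_.ball G v 3).verts) : x = v ∨ G.Adj v x := by
  obtain ⟨hreach, hdist⟩ := hx
  rcases Nat.le_one_iff_eq_zero_or_eq_one.1 hdist with h | h
  · exact .inl (hreach.dist_eq_zero_iff.1 h).symm
  · exact .inr (dist_eq_one_iff_adj.1 h)

lemma ball_adj_iff_of_odd {V : Type*} {G : SimpleGraph V} {v x y : V} {r : ℕ} (hr : Odd r)
    (hx : x ∈ (_root_.ball G v r).verts) (hy : y ∈ (_root_.ball G v r).verts) :
    (_root_.ball G v r).Adj x y ↔ G.Adj x y := by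
  obtain ⟨k, rfl⟩ := hr
  refine ⟨fun h => h.1, fun h => ⟨h, hx, hy, ?_⟩⟩
  have := hx.2
  have := hy.2
  omega

theorem stmt_14_general {V : Type*} (G : SimpleGraph V)
    (h : IsRAcyclicCircularArcGraph G 3) : LocallyInterval G 3 := by
  classical
  intro v
  obtain ⟨n, hn, A, ⟨hpath, hadj⟩, hacyc⟩ := h
  have : NeZero n := ⟨by omega⟩
  obtain ⟨l₀, r₀, hv⟩ := exists_isArcLift (hpath v)
  have meets : ∀ x : (_root_.ball G v 3).verts, ∃ l r, IsArcLift (A x) l r ∧ l ≤ r₀ ∧ l₀ ≤ r := by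
    rintro ⟨x, hx⟩
    have hvx : ((A v).verts ∩ (A x).verts).Nonempty := by
      rcases eq_or_adj_of_mem_ball_three hx with rfl | hadjvx
      · rw [Set.inter_self, hv.verts_eq]
        exact ⟨_, l₀, ⟨le_rfl, hv.le⟩, rfl⟩
      · exact (hadj v x hadjvx.ne).1 hadjvx
    obtain ⟨_, _, hxlift⟩ := exists_isArcLift (hpath x)
    exact hv.exists_overlapping hxlift hvx
  choose l r hlift hl hr using meets
  refine ⟨fun x => Set.Icc (l x : ℝ) (r x), fun x => ⟨_, _, by exact_mod_cast (hlift x).le, rfl⟩,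
    fun x y hxy => ?_⟩
  set X : Finset V := {v, x.1, y.1}
  have hle (u : V) (hu : u ∈ X) : A u ≤ ⨆ w ∈ X, A w := le_iSup₂_of_le u hu le_rfl
  rw [Subgraph.coe_adj, ball_adj_iff_of_odd (by decide) x.2 y.2,
    hadj _ _ (Subtype.coe_ne_coe.2 hxy),
    hv.verts_inter_nonempty_iff hn (hlift x) (hlift y) (hl x) (hr x) (hl y) (hr y)
      (hle _ (by simp [X])) (hle _ (by simp [X])) (hle _ (by simp [X]))
      (hacyc X Finset.card_le_three),
    Set.Icc_inter_Icc, Set.nonempty_Icc]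
  have := (hlift x).le
  have := (hlift y).le
  simp only [sup_le_iff, le_inf_iff, Int.cast_le]
  omega

/-- Every finite 3-acyclic circular-arc graph is 3-locally interval. -/
theorem stmt_14 {V : Type*} [Fintype V] (G : SimpleGraph V)
    (h : IsRAcyclicCircularArcGraph G 3) : LocallyInterval G 3 :=
  stmt_14_general G h
end
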